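/- Ascent direction property: let R, G be strictly convex compact sets, p nonzero with ρ_lower(p) ≥ 0 and δ(p) > 0, and set q = (s_G(−p) − s_R(p))/‖s_G(−p) − s_R(p)‖ − p. Then the directional derivative of ρ_lower at p in direction q equals δ(p)(ρ_upper(p) + ρ_lower(p)) / (‖p‖ ρ_upper(p)) and is strictly positive; consequently there exists γ̃ > 0 such that ρ_lower(p + γq) > ρ_lower(p) for all γ ∈ (0, γ̃). -/

import Mathlib

/-!
The support function `h(x) = ⟪x, s x⟫` of a compact set `K`, with `s x` the unique maximiser of
`⟪x, ·⟫` on `K`, is differentiable at `p ≠ 0` with gradient `s p` (Danskin): comparing the two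
maximisers gives `0 ≤ h(x) - h(p) - ⟪x - p, s p⟫ ≤ ⟪x - p, s x - s p⟫`, and `s` is continuous
at `p` because every cluster point of `s x` as `x → p` maximises `⟪p, ·⟫`. So the numerator
`⟪x, s_G(-x) - s_R(x)⟫ = -h_G(-x) - h_R(x)` of `ρ_lower` has gradient `s_G(-p) - s_R(p)`, and the
quotient rule along `p + γq` gives the stated derivative; a positive derivative at `0` makes the
function increase on a right neighbourhood of `0`.
-/

open RealInnerProductSpace Filter Topology

variable {E : Type*} [NormedAddCommGroup E] [InnerProductSpace ℝ E]

theorem continuousAt_of_isMaxOn_inner {K : Set E} (hK : IsCompact K) {s : E → E} {p : E}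
    (hs : ∀ᶠ x in 𝓝 p, s x ∈ K ∧ IsMaxOn (⟪x, ·⟫) K (s x))
    (huniq : ∀ y ∈ K, IsMaxOn (⟪p, ·⟫) K y → y = s p) :
    ContinuousAt s p := by
  refine hK.tendsto_nhds_of_unique_mapClusterPt (hs.mono fun _ h => h.1) fun y hy hcl => ?_
  refine huniq y hy fun z hz => ?_
  obtain ⟨U, hUp, hUy⟩ := mapClusterPt_iff_ultrafilter.1 hcl
  have hU : Tendsto id (U : Filter E) (𝓝 p) := hUp
  exact le_of_tendsto_of_tendsto (f := (⟪·, z⟫)) (g := fun x => ⟪x, s x⟫)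
    (hU.inner tendsto_const_nhds) (hU.inner hUy)
    ((hU.eventually hs).mono fun x hx => hx.2 hz)

theorem hasFDerivAt_inner_of_isMaxOn {K : Set E} {s : E → E} {p : E}
    (hs : ∀ᶠ x in 𝓝 p, s x ∈ K ∧ IsMaxOn (⟪x, ·⟫) K (s x)) (hcont : ContinuousAt s p) :
    HasFDerivAt (fun x => ⟪x, s x⟫) (innerSL ℝ (s p)) p := by
  have hsp := hs.self_of_nhds
  refine HasFDerivAt.of_isLittleO (Asymptotics.isLittleO_iff.2 fun c hc => ?_)
  filter_upwards [hs, hcont.eventually (Metric.closedBall_mem_nhds (s p) hc)] with x hx hxc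
  have hlow : 0 ≤ ⟪x, s x⟫ - ⟪p, s p⟫ - innerSL ℝ (s p) (x - p) := by
    have h1 : ⟪x, s p⟫ ≤ ⟪x, s x⟫ := hx.2 hsp.1
    rw [innerSL_apply_apply, real_inner_comm (x - p), inner_sub_left]
    linarith
  have hup : ⟪x, s x⟫ - ⟪p, s p⟫ - innerSL ℝ (s p) (x - p) ≤ ⟪x - p, s x - s p⟫ := by
    have h2 : ⟪p, s x⟫ ≤ ⟪p, s p⟫ := hsp.2 hx.1
    rw [innerSL_apply_apply, real_inner_comm (x - p)]
    simp only [inner_sub_left, inner_sub_right]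
    linarith
  rw [Real.norm_of_nonneg hlow]
  calc _ ≤ ⟪x - p, s x - s p⟫ := hup
    _ ≤ ‖x - p‖ * ‖s x - s p‖ := real_inner_le_norm _ _
    _ ≤ c * ‖x - p‖ := by
      rw [mul_comm]
      exact mul_le_mul_of_nonneg_right (by simpa [dist_eq_norm] using hxc) (norm_nonneg _)

theorem hasFDerivAt_inner_of_isMaxOn_of_isCompact {K : Set E} (hK : IsCompact K) {s : E → E}
    (hs : ∀ x ≠ 0, s x ∈ K ∧ IsMaxOn (⟪x, ·⟫) K (s x)) {p : E} (hp : p ≠ 0)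
    (huniq : ∀ y ∈ K, IsMaxOn (⟪p, ·⟫) K y → y = s p) :
    HasFDerivAt (fun x => ⟪x, s x⟫) (innerSL ℝ (s p)) p :=
  have hs' : ∀ᶠ x in 𝓝 p, s x ∈ K ∧ IsMaxOn (⟪x, ·⟫) K (s x) :=
    (eventually_ne_nhds hp).mono hs
  hasFDerivAt_inner_of_isMaxOn hs' (continuousAt_of_isMaxOn_inner hK hs' huniq)

theorem hasFDerivAt_inner_sub_of_isMaxOn {K L : Set E} (hK : IsCompact K) (hL : IsCompact L)
    {s t : E → E} (hs : ∀ x ≠ 0, s x ∈ K ∧ IsMaxOn (⟪x, ·⟫) K (s x))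
    (ht : ∀ x ≠ 0, t x ∈ L ∧ IsMaxOn (⟪x, ·⟫) L (t x)) {p : E} (hp : p ≠ 0)
    (hsuniq : ∀ y ∈ K, IsMaxOn (⟪p, ·⟫) K y → y = s p)
    (htuniq : ∀ y ∈ L, IsMaxOn (⟪-p, ·⟫) L y → y = t (-p)) :
    HasFDerivAt (fun x => ⟪x, t (-x) - s x⟫) (innerSL ℝ (t (-p) - s p)) p := by
  have hK' := hasFDerivAt_inner_of_isMaxOn_of_isCompact hK hs hp hsuniq
  have hL' := (hasFDerivAt_inner_of_isMaxOn_of_isCompact hL ht (neg_ne_zero.2 hp) htuniq).comp p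
    (hasFDerivAt_id p).neg
  have hfun : (fun x => ⟪x, t (-x) - s x⟫) = fun x => -⟪-x, t (-x)⟫ - ⟪x, s x⟫ := by
    funext x
    rw [inner_sub_right, inner_neg_left, neg_neg]
  rw [hfun]
  refine (hL'.neg.sub hK').congr_fderiv ?_
  ext v
  simp

theorem HasDerivAt.norm {f : ℝ → E} {f' : E} {t : ℝ} (hf : HasDerivAt f f' t) (h0 : f t ≠ 0) :
    HasDerivAt (fun u => ‖f u‖) (⟪f t, f'⟫ / ‖f t‖) t := by
  have h := hf.norm_sq.sqrt (by positivity)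
  simp only [Real.sqrt_sq (norm_nonneg _)] at h
  convert h using 1
  ring

theorem HasDerivAt.eventually_nhdsGT_lt {f : ℝ → ℝ} {f' x : ℝ} (hf : HasDerivAt f f' x)
    (hf' : 0 < f') : ∀ᶠ y in 𝓝[>] x, f x < f y := by
  filter_upwards [nhdsGT_le_nhdsNE x
      ((hasDerivAt_iff_tendsto_slope.1 hf).eventually (eventually_gt_nhds hf')),
    self_mem_nhdsWithin] with y hslope hxy
  exact (slope_pos_iff_of_le hxy.le).1 hslope

theorem ascent_direction_general {n : ℕ} (R G : Set (EuclideanSpace ℝ (Fin n)))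
    (hRc : IsCompact R)
    (hGc : IsCompact G)
    (sR sG : EuclideanSpace ℝ (Fin n) → EuclideanSpace ℝ (Fin n))
    (hsR : ∀ p : EuclideanSpace ℝ (Fin n), p ≠ 0 →
      sR p ∈ R ∧ IsMaxOn (fun s => ⟪p, s⟫) R (sR p))
    (hsG : ∀ p : EuclideanSpace ℝ (Fin n), p ≠ 0 →
      sG p ∈ G ∧ IsMaxOn (fun s => ⟪p, s⟫) G (sG p))
    (huniqR : ∀ p : EuclideanSpace ℝ (Fin n), p ≠ 0 →
      ∀ s ∈ R, IsMaxOn (fun x => ⟪p, x⟫) R s → s = sR p)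
    (huniqG : ∀ p : EuclideanSpace ℝ (Fin n), p ≠ 0 →
      ∀ s ∈ G, IsMaxOn (fun x => ⟪p, x⟫) G s → s = sG p)
    (p : EuclideanSpace ℝ (Fin n)) (hp : p ≠ 0)
    (ρl ρu : ℝ)
    (hρl : ρl = ⟪p, sG (-p) - sR p⟫ / ‖p‖)
    (hρu : ρu = ‖sG (-p) - sR p‖)
    (hρl0 : 0 ≤ ρl) (hδ : 0 < ρu - ρl)
    (q : EuclideanSpace ℝ (Fin n))
    (hq : q = ρu⁻¹ • (sG (-p) - sR p) - p) :
    HasDerivAt (fun γ : ℝ => ⟪p + γ • q, sG (-(p + γ • q)) - sR (p + γ • q)⟫ / ‖p + γ • q‖)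
        ((ρu - ρl) * (ρu + ρl) / (‖p‖ * ρu)) 0 ∧
      0 < (ρu - ρl) * (ρu + ρl) / (‖p‖ * ρu) ∧
      ∃ γt : ℝ, 0 < γt ∧ ∀ γ : ℝ, 0 < γ → γ < γt →
        ⟪p, sG (-p) - sR p⟫ / ‖p‖ <
          ⟪p + γ • q, sG (-(p + γ • q)) - sR (p + γ • q)⟫ / ‖p + γ • q‖ := by
  have hρu0 : 0 < ρu := by linarith
  have hline : HasDerivAt (fun γ : ℝ => p + γ • q) q 0 := by
    simpa using ((hasDerivAt_id (0 : ℝ)).smul_const q).const_add p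
  have hnum := (hasFDerivAt_inner_sub_of_isMaxOn hRc hGc hsR hsG hp (huniqR p hp)
    (huniqG (-p) (neg_ne_zero.2 hp))).comp_hasDerivAt_of_eq 0 hline (by simp)
  have hderiv := hnum.div (hline.norm (by simpa)) (by simpa)
  have hpD : ⟪p, sG (-p) - sR p⟫ = ρl * ‖p‖ := by
    rw [hρl]
    field_simp
  have hDq : ⟪sG (-p) - sR p, q⟫ = ρu - ρl * ‖p‖ := by
    rw [hq, inner_sub_right, real_inner_smul_right, real_inner_self_eq_norm_sq, ← hρu,
      real_inner_comm, hpD]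
    field_simp
  have hpq : ⟪p, q⟫ = ρl * ‖p‖ / ρu - ‖p‖ ^ 2 := by
    rw [hq, inner_sub_right, real_inner_smul_right, real_inner_self_eq_norm_sq, hpD]
    field_simp
  have hF : HasDerivAt (fun γ : ℝ => ⟪p + γ • q, sG (-(p + γ • q)) - sR (p + γ • q)⟫ /
      ‖p + γ • q‖) ((ρu - ρl) * (ρu + ρl) / (‖p‖ * ρu)) 0 := by
    refine hderiv.congr_deriv ?_
    simp only [Function.comp_apply, zero_smul, add_zero, innerSL_apply_apply, hpD, hDq, hpq]
    field_simp
    ring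
  have hpos : 0 < (ρu - ρl) * (ρu + ρl) / (‖p‖ * ρu) := by positivity
  refine ⟨hF, hpos, ?_⟩
  obtain ⟨γt, hγt, hsub⟩ := mem_nhdsGT_iff_exists_Ioo_subset.1 (hF.eventually_nhdsGT_lt hpos)
  exact ⟨γt, hγt, fun γ h0 h1 => by simpa using hsub ⟨h0, h1⟩⟩

/-- Ascent direction property (Eaton): with `q = (s_G(-p) - s_R(p))/ρ_upper(p) - p`,
the directional derivative of `ρ_lower` at `p` in direction `q` equals
`δ(p)(ρ_upper(p) + ρ_lower(p)) / (‖p‖ ρ_upper(p))`, is strictly positive, and hence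
`ρ_lower(p + γq) > ρ_lower(p)` for all small enough `γ > 0`. -/
theorem ascent_direction {n : ℕ} (R G : Set (EuclideanSpace ℝ (Fin n)))
    (hRc : IsCompact R) (hRs : StrictConvex ℝ R)
    (hGc : IsCompact G) (hGs : StrictConvex ℝ G)
    (sR sG : EuclideanSpace ℝ (Fin n) → EuclideanSpace ℝ (Fin n))
    (hsR : ∀ p : EuclideanSpace ℝ (Fin n), p ≠ 0 →
      sR p ∈ R ∧ IsMaxOn (fun s => ⟪p, s⟫) R (sR p))
    (hsG : ∀ p : EuclideanSpace ℝ (Fin n), p ≠ 0 →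
      sG p ∈ G ∧ IsMaxOn (fun s => ⟪p, s⟫) G (sG p))
    (huniqR : ∀ p : EuclideanSpace ℝ (Fin n), p ≠ 0 →
      ∀ s ∈ R, IsMaxOn (fun x => ⟪p, x⟫) R s → s = sR p)
    (huniqG : ∀ p : EuclideanSpace ℝ (Fin n), p ≠ 0 →
      ∀ s ∈ G, IsMaxOn (fun x => ⟪p, x⟫) G s → s = sG p)
    (p : EuclideanSpace ℝ (Fin n)) (hp : p ≠ 0)
    (ρl ρu : ℝ)
    (hρl : ρl = ⟪p, sG (-p) - sR p⟫ / ‖p‖)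
    (hρu : ρu = ‖sG (-p) - sR p‖)
    (hρl0 : 0 ≤ ρl) (hδ : 0 < ρu - ρl)
    (q : EuclideanSpace ℝ (Fin n))
    (hq : q = ρu⁻¹ • (sG (-p) - sR p) - p) :
    HasDerivAt (fun γ : ℝ => ⟪p + γ • q, sG (-(p + γ • q)) - sR (p + γ • q)⟫ / ‖p + γ • q‖)
        ((ρu - ρl) * (ρu + ρl) / (‖p‖ * ρu)) 0 ∧
      0 < (ρu - ρl) * (ρu + ρl) / (‖p‖ * ρu) ∧
      ∃ γt : ℝ, 0 < γt ∧ ∀ γ : ℝ, 0 < γ → γ < γt →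
        ⟪p, sG (-p) - sR p⟫ / ‖p‖ <
          ⟪p + γ • q, sG (-(p + γ • q)) - sR (p + γ • q)⟫ / ‖p + γ • q‖ :=
  ascent_direction_general R G hRc hGc sR sG hsR hsG huniqR huniqG p hp ρl ρu hρl hρu hρl0 hδ q hq
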